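/- arXiv:2108.07715 — 7 statements merged into one kernel-verified Lean document; each statement's English description precedes it below -/
import Mathlib

section
/- Suppose (x_i, v_i)_{i=1}^N follows the sticky particle Cucker–Smale dynamics associated to masses (m_i)_{i=1}^N and protocol φ. Define ψ_i(t) = v_i(t) + Σ_{j=1}^N m_j Φ(x_i(t) − x_j(t)), where Φ(x) = ∫_0^x φ(y)dy. Then each ψ_i is constant on every connected component of [0,∞) \ C; in particular, at every t ∉ C, ψ_i is differentiable with (d/dt)ψ_i(t) = 0. -/
open MeasureTheory Set Filter
open scoped Classical

/-- `Φ(x) = ∫_0^x φ(y) dy`, the odd antiderivative of the communication protocol. -/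
noncomputable def Phi (φ : ℝ → ℝ) (x : ℝ) : ℝ := ∫ y in (0:ℝ)..x, φ y

/-- The sticky particle Cucker–Smale dynamics with `N` particles, masses `m`,
communication protocol `φ`, collision-time set `C`, positions `x` and velocities `v`. -/
structure StickyCS (N : ℕ) (m : Fin N → ℝ) (φ : ℝ → ℝ) (C : Set ℝ)
    (x v : Fin N → ℝ → ℝ) : Prop where
  m_pos : ∀ i, 0 < m i
  m_sum : ∑ i, m i = 1
  φ_nonneg : ∀ z, 0 ≤ φ z
  φ_even : ∀ z, φ (-z) = φ z
  φ_locint : ∀ a b : ℝ, IntervalIntegrable φ volume a b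
  φ_anti : AntitoneOn φ (Ioi 0)
  φ_cont : ContinuousOn φ {(0:ℝ)}ᶜ
  C_fin : C.Finite
  C_pos : C ⊆ Ioi 0
  x_cont : ∀ i, ContinuousOn (x i) (Ici 0)
  x_ord : ∀ i j : Fin N, i ≤ j → ∀ t ∈ Ici (0:ℝ), x i t ≤ x j t
  v_rc : ∀ i, ∀ t ∈ Ici (0:ℝ), ContinuousWithinAt (v i) (Ici t) t
  x_deriv : ∀ i, ∀ t ∈ Ici (0:ℝ) \ C, HasDerivWithinAt (x i) (v i t) (Ici 0) t
  v_deriv : ∀ i, ∀ t ∈ Ici (0:ℝ) \ C, HasDerivWithinAt (v i)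
      (∑ j ∈ Finset.univ.filter (fun j => x j t ≠ x i t),
        m j * φ (x j t - x i t) * (v j t - v i t)) (Ici 0) t
  sticky : ∀ i j : Fin N, ∀ s t : ℝ, 0 ≤ s → s ≤ t → x i s = x j s → x i t = x j t
  collide : ∀ τ ∈ C, ∀ i : Fin N,
      v i τ = (∑ j ∈ Finset.univ.filter (fun j => x j τ = x i τ),
                m j * Function.leftLim (v j) τ)
              / (∑ j ∈ Finset.univ.filter (fun j => x j τ = x i τ), m j)

/-!
Away from `C`, the derivative of `Σ_j m_j Φ(x_i - x_j)` is `Σ_j m_j φ(x_i - x_j)(v_i - v_j)` over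
the particles not stuck to `i`, which by evenness of `φ` is exactly minus the alignment force
driving `v_i`; particles stuck to `i` contribute nothing, as `Φ(0) = 0` and they stay stuck.
Since a particle may join `i` at a time outside `C`, this only gives a vanishing right derivative.
Together with continuity away from `C` it still makes `ψ_i` constant on collision-free intervals,
and local constancy then yields the two-sided derivative.
-/

open Topology

theorem Phi_hasDerivAt {φ : ℝ → ℝ} (hφ : ∀ a b, IntervalIntegrable φ volume a b) {z : ℝ}
    (hz : ContinuousAt φ z) : HasDerivAt (Phi φ) (φ z) z := by
  have hmeas : StronglyMeasurableAtFilter φ (𝓝 z) :=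
    AEStronglyMeasurable.stronglyMeasurableAtFilter_of_mem (hφ (z - 1) (z + 1)).1.1
      (Ioc_mem_nhds (by linarith) (by linarith))
  exact intervalIntegral.integral_hasDerivAt_right (hφ 0 z) hmeas hz

@[simp]
theorem Phi_zero (φ : ℝ → ℝ) : Phi φ 0 = 0 := intervalIntegral.integral_same

namespace StickyCS

variable {N : ℕ} {m : Fin N → ℝ} {φ : ℝ → ℝ} {C : Set ℝ} {x v : Fin N → ℝ → ℝ}

noncomputable def psi (m : Fin N → ℝ) (φ : ℝ → ℝ) (x v : Fin N → ℝ → ℝ) (i : Fin N) (t : ℝ) :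
    ℝ :=
  v i t + ∑ j, m j * Phi φ (x i t - x j t)

theorem hasDerivWithinAt_Phi_sub_of_ne (h : StickyCS N m φ C x v) {i j : Fin N} {t : ℝ}
    (ht : t ∈ Ici 0 \ C) (hij : x i t ≠ x j t) :
    HasDerivWithinAt (fun s => Phi φ (x i s - x j s)) (φ (x i t - x j t) * (v i t - v j t))
      (Ici 0) t := by
  have hΦ : HasDerivAt (Phi φ) (φ (x i t - x j t)) (x i t - x j t) :=
    Phi_hasDerivAt h.φ_locint
      (h.φ_cont.continuousAt (isOpen_compl_singleton.mem_nhds (sub_ne_zero.mpr hij)))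
  exact hΦ.comp_hasDerivWithinAt t ((h.x_deriv i t ht).sub (h.x_deriv j t ht))

theorem Phi_sub_eqOn_of_eq (h : StickyCS N m φ C x v) {i j : Fin N} {t : ℝ} (ht : 0 ≤ t)
    (hij : x i t = x j t) : EqOn (fun s => Phi φ (x i s - x j s)) 0 (Ici t) := fun s hs => by
  simp [h.sticky i j t s ht hs hij]

theorem hasDerivWithinAt_Ici_sum_mul_Phi_sub (h : StickyCS N m φ C x v) {i : Fin N} {t : ℝ}
    (ht : t ∈ Ici 0 \ C) :
    HasDerivWithinAt (fun s => ∑ j, m j * Phi φ (x i s - x j s))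
      (-∑ j ∈ Finset.univ.filter (fun j => x j t ≠ x i t),
        m j * φ (x j t - x i t) * (v j t - v i t)) (Ici t) t := by
  rw [← Finset.sum_neg_distrib, Finset.sum_filter]
  refine HasDerivWithinAt.fun_sum fun j _ => ?_
  split_ifs with hji
  · refine (((h.hasDerivWithinAt_Phi_sub_of_ne ht (Ne.symm hji)).mono
      (Ici_subset_Ici.2 ht.1)).const_mul (m j)).congr_deriv ?_
    rw [← neg_sub (x j t), h.φ_even]
    ring
  · have hstuck := h.Phi_sub_eqOn_of_eq ht.1 (not_not.1 hji).symm
    exact (hasDerivWithinAt_const t _ 0).congr (fun s hs => by simp [hstuck hs])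
      (by simp [hstuck self_mem_Ici])

theorem hasDerivWithinAt_Ici_psi (h : StickyCS N m φ C x v) {i : Fin N} {t : ℝ}
    (ht : t ∈ Ici 0 \ C) : HasDerivWithinAt (psi m φ x v i) 0 (Ici t) t :=
  (((h.v_deriv i t ht).mono (Ici_subset_Ici.2 ht.1)).add
    (h.hasDerivWithinAt_Ici_sum_mul_Phi_sub ht)).congr_deriv (add_neg_cancel _)

theorem continuousWithinAt_psi (h : StickyCS N m φ C x v) {i : Fin N} {t : ℝ}
    (ht : t ∈ Ici 0 \ C) : ContinuousWithinAt (psi m φ x v i) (Ici 0) t :=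
  (h.v_deriv i t ht).continuousWithinAt.add <|
    continuousOn_finsetSum _ (fun j _ => continuousOn_const.mul
      ((intervalIntegral.continuous_primitive h.φ_locint 0).comp_continuousOn
        ((h.x_cont i).sub (h.x_cont j)))) t ht.1

theorem psi_eq_of_Icc_inter_eq_empty (h : StickyCS N m φ C x v) {i : Fin N} {s t : ℝ}
    (hs : 0 ≤ s) (hst : s ≤ t) (hC : Icc s t ∩ C = ∅) :
    psi m φ x v i s = psi m φ x v i t := by
  have hfree : Icc s t ⊆ Ici 0 \ C := fun u hu =>
    ⟨hs.trans hu.1, fun huC => hC.subset ⟨hu, huC⟩⟩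
  have hcont : ContinuousOn (psi m φ x v i) (Icc s t) := fun u hu =>
    (h.continuousWithinAt_psi (hfree hu)).mono (hfree.trans sdiff_subset)
  exact (constant_of_has_deriv_right_zero hcont
    (fun u hu => h.hasDerivWithinAt_Ici_psi (hfree (Ico_subset_Icc_self hu)))
    t (right_mem_Icc.2 hst)).symm

theorem hasDerivWithinAt_psi (h : StickyCS N m φ C x v) {i : Fin N} {t : ℝ}
    (ht : t ∈ Ici 0 \ C) : HasDerivWithinAt (psi m φ x v i) 0 (Ici 0) t := by
  obtain ⟨a, b, hab, hCab⟩ :=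
    mem_nhds_iff_exists_Ioo_subset.1 (h.C_fin.isClosed.isOpen_compl.mem_nhds ht.2)
  have hfree : ∀ u ∈ Ioo a b, ∀ w ∈ Ioo a b, Icc u w ∩ C = ∅ := fun u hu w hw =>
    disjoint_iff_inter_eq_empty.1
      (subset_compl_iff_disjoint_right.1 ((ordConnected_Ioo.out hu hw).trans hCab))
  have hloc : psi m φ x v i =ᶠ[𝓝[Ici 0] t] fun _ => psi m φ x v i t := by
    filter_upwards [mem_nhdsWithin_of_mem_nhds (Ioo_mem_nhds hab.1 hab.2), self_mem_nhdsWithin]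
      with u hu hu0
    rcases le_total u t with hut | htu
    · exact h.psi_eq_of_Icc_inter_eq_empty hu0 hut (hfree u hu t hab)
    · exact (h.psi_eq_of_Icc_inter_eq_empty ht.1 htu (hfree t hab u hu)).symm
  exact (hasDerivWithinAt_const t _ _).congr_of_eventuallyEq hloc rfl

end StickyCS

/-- The quantity `ψ_i(t) = v_i(t) + Σ_j m_j Φ(x_i(t) − x_j(t))` is constant
on every connected component of `[0,∞) \ C`: it has zero derivative at every non-collision
time, and it takes equal values at any two times of `[0,∞)` whose closed interval between
them avoids the collision set `C`. -/
theorem sticky_CS_psi_constant {N : ℕ} (m : Fin N → ℝ) (φ : ℝ → ℝ)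
    (C : Set ℝ) (x v : Fin N → ℝ → ℝ) (h : StickyCS N m φ C x v)
    (ψ : Fin N → ℝ → ℝ)
    (hψ : ∀ i t, ψ i t = v i t + ∑ j, m j * Phi φ (x i t - x j t)) :
    (∀ i : Fin N, ∀ t ∈ Ici (0:ℝ) \ C, HasDerivWithinAt (ψ i) 0 (Ici 0) t) ∧
    (∀ i : Fin N, ∀ s t : ℝ, 0 ≤ s → s ≤ t → Icc s t ∩ C = ∅ → ψ i s = ψ i t) := by
  obtain rfl : ψ = StickyCS.psi m φ x v := funext fun i => funext (hψ i)
  exact ⟨fun i t ht => h.hasDerivWithinAt_psi ht,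
    fun i s t hs hst hC => h.psi_eq_of_Icc_inter_eq_empty hs hst hC⟩
end

section
/- Suppose (x_i, v_i)_{i=1}^N follows the sticky particle Cucker–Smale dynamics associated to masses (m_i)_{i=1}^N and protocol φ. Define ψ_i(t) = v_i(t) + Σ_{j=1}^N m_j Φ(x_i(t) − x_j(t)), where Φ(x) = ∫_0^x φ(y)dy. Then at every collision time τ ∈ C and for every i, ψ_i(τ) = (Σ_{j ∈ J_i(τ)} m_j ψ_j(τ−)) / (Σ_{j ∈ J_i(τ)} m_j), where ψ_j(τ−) denotes the left limit of ψ_j at τ. -/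
open MeasureTheory Set Filter
open scoped Classical

open Topology Function

/-!
The potential `P_i(t) = Σ_j m_j Φ(x_i(t) − x_j(t))` is continuous in time, and away from
collisions its right derivative is exactly minus the alignment force on particle `i`: since `φ` is
even, `d/dt Φ(x_i − x_j) = φ(x_j − x_i)(v_i − v_j)` for separated pairs, while a stuck pair keeps
`Φ(x_i − x_j) = Φ(0)` forever. Hence `ψ_i = v_i + P_i` is constant just before a collision time `τ`,
so `ψ_i(τ−) = v_i(τ−) + P_i(τ)`. Particles colliding at `τ` share the value `P_i(τ)`, and adding a
common constant commutes with taking a barycentre, so the collision rule for `v` becomes the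
one for `ψ`.
-/

lemma hasDerivAt_Phi {φ : ℝ → ℝ} {z : ℝ} (hint : IntervalIntegrable φ volume 0 z)
    (hcont : ContinuousOn φ {0}ᶜ) (hz : z ≠ 0) : HasDerivAt (Phi φ) (φ z) z :=
  intervalIntegral.integral_hasDerivAt_right hint
    (hcont.stronglyMeasurableAtFilter isOpen_compl_singleton z hz)
    (hcont.continuousAt (isOpen_compl_singleton.mem_nhds hz))

lemma exists_eventually_eq_nhdsLT_of_hasDerivWithinAt_Ici_zero {f : ℝ → ℝ} {b : ℝ}
    (hf : ∀ᶠ t in 𝓝[<] b, ContinuousAt f t ∧ HasDerivWithinAt f 0 (Ici t) t) :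
    ∃ c, ∀ᶠ t in 𝓝[<] b, f t = c := by
  obtain ⟨a, hab, hsub⟩ := mem_nhdsLT_iff_exists_Ico_subset.1 hf
  refine ⟨f a, mem_nhdsLT_iff_exists_Ico_subset.2 ⟨a, hab, fun t ht => ?_⟩⟩
  have hIcc : Icc a t ⊆ Ico a b := Icc_subset_Ico_right ht.2
  exact constant_of_has_deriv_right_zero
    (fun s hs => (hsub (hIcc hs)).1.continuousWithinAt)
    (fun s hs => (hsub (hIcc (Ico_subset_Icc_self hs))).2) t (right_mem_Icc.2 ht.1)

lemma sum_mul_div_sum_add {ι 𝕜 : Type*} [Field 𝕜] (s : Finset ι) (w b : ι → 𝕜) (c : 𝕜)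
    (hw : ∑ j ∈ s, w j ≠ 0) :
    (∑ j ∈ s, w j * b j) / (∑ j ∈ s, w j) + c = (∑ j ∈ s, w j * (b j + c)) / ∑ j ∈ s, w j := by
  rw [div_add' _ _ _ hw]
  simp only [mul_add, Finset.sum_add_distrib, ← Finset.sum_mul, mul_comm c]

noncomputable def phiPotential {N : ℕ} (m : Fin N → ℝ) (φ : ℝ → ℝ) (x : Fin N → ℝ → ℝ)
    (i : Fin N) (t : ℝ) : ℝ :=
  ∑ j, m j * Phi φ (x i t - x j t)

namespace StickyCS

variable {N : ℕ} {m : Fin N → ℝ} {φ : ℝ → ℝ} {C : Set ℝ} {x v : Fin N → ℝ → ℝ}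

theorem continuousOn_phiPotential (h : StickyCS N m φ C x v) (i : Fin N) :
    ContinuousOn (phiPotential m φ x i) (Ici 0) := by
  have hΦ : Continuous (Phi φ) := intervalIntegral.continuous_primitive h.φ_locint 0
  exact continuousOn_finsetSum _ fun j _ =>
    continuousOn_const.mul (hΦ.comp_continuousOn ((h.x_cont i).sub (h.x_cont j)))

theorem hasDerivWithinAt_Phi_sub (h : StickyCS N m φ C x v) {t : ℝ} (ht : t ∈ Ici 0 \ C)
    (i j : Fin N) :
    HasDerivWithinAt (fun s => Phi φ (x i s - x j s))
      (if x j t = x i t then 0 else φ (x j t - x i t) * (v i t - v j t)) (Ici t) t := by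
  split_ifs with hji
  · refine (hasDerivWithinAt_const t _ (Phi φ 0)).congr (fun s hs => ?_) ?_
    · rw [h.sticky j i t s ht.1 hs hji, sub_self]
    · rw [hji, sub_self]
  · have hne : x i t - x j t ≠ 0 := sub_ne_zero.2 (Ne.symm hji)
    have hx : ∀ k, HasDerivWithinAt (x k) (v k t) (Ici t) t := fun k =>
      (h.x_deriv k t ht).mono (Ici_subset_Ici.2 ht.1)
    rw [← neg_sub, h.φ_even]
    exact (hasDerivAt_Phi (h.φ_locint 0 _) h.φ_cont hne).comp_hasDerivWithinAt t
      ((hx i).sub (hx j))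

theorem hasDerivWithinAt_phiPotential (h : StickyCS N m φ C x v) {t : ℝ} (ht : t ∈ Ici 0 \ C)
    (i : Fin N) :
    HasDerivWithinAt (phiPotential m φ x i)
      (-∑ j ∈ Finset.univ.filter (fun j => x j t ≠ x i t),
        m j * φ (x j t - x i t) * (v j t - v i t)) (Ici t) t := by
  refine (HasDerivWithinAt.fun_sum (u := Finset.univ) fun j _ =>
    (h.hasDerivWithinAt_Phi_sub ht i j).const_mul (m j)).congr_deriv ?_
  rw [Finset.sum_filter, ← Finset.sum_neg_distrib]
  refine Finset.sum_congr rfl fun j _ => ?_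
  simp only [ne_eq, ite_not]
  split_ifs <;> ring

theorem hasDerivWithinAt_add_phiPotential (h : StickyCS N m φ C x v) {t : ℝ}
    (ht : t ∈ Ici 0 \ C) (i : Fin N) :
    HasDerivWithinAt (fun s => v i s + phiPotential m φ x i s) 0 (Ici t) t := by
  simpa only [add_neg_cancel] using ((h.v_deriv i t ht).mono (Ici_subset_Ici.2 ht.1)).fun_add
    (h.hasDerivWithinAt_phiPotential ht i)

theorem continuousAt_add_phiPotential (h : StickyCS N m φ C x v) {t : ℝ} (ht : t ∈ Ioi 0 \ C)
    (i : Fin N) : ContinuousAt (fun s => v i s + phiPotential m φ x i s) t := by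
  have hnhds : Ici (0 : ℝ) ∈ 𝓝 t := Ici_mem_nhds ht.1
  have hv := (h.v_deriv i t ⟨Ioi_subset_Ici_self ht.1, ht.2⟩).continuousWithinAt
  exact (hv.continuousAt hnhds).add ((h.continuousOn_phiPotential i).continuousAt hnhds)

theorem leftLim_add_phiPotential (h : StickyCS N m φ C x v) {τ : ℝ} (hτ : 0 < τ) (i : Fin N) :
    leftLim (fun s => v i s + phiPotential m φ x i s) τ
      = leftLim (v i) τ + phiPotential m φ x i τ := by
  have hC : ∀ᶠ t in 𝓝[<] τ, t ∉ C :=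
    (nhdsLT_le_nhdsNE τ).trans (nhdsNE_le_cofinite τ) h.C_fin.eventually_cofinite_notMem
  obtain ⟨c, hc⟩ := exists_eventually_eq_nhdsLT_of_hasDerivWithinAt_Ici_zero <| by
    filter_upwards [Ioo_mem_nhdsLT hτ, hC] with t ht htC
    exact ⟨h.continuousAt_add_phiPotential ⟨ht.1, htC⟩ i,
      h.hasDerivWithinAt_add_phiPotential ⟨Ioi_subset_Ici_self ht.1, htC⟩ i⟩
  have hψ : Tendsto (fun s => v i s + phiPotential m φ x i s) (𝓝[<] τ) (𝓝 c) :=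
    tendsto_const_nhds.congr' (hc.mono fun _ => Eq.symm)
  have hP : Tendsto (phiPotential m φ x i) (𝓝[<] τ) (𝓝 (phiPotential m φ x i τ)) :=
    ((h.continuousOn_phiPotential i).continuousAt (Ici_mem_nhds hτ)).tendsto.mono_left
      nhdsWithin_le_nhds
  have hv : Tendsto (v i) (𝓝[<] τ) (𝓝 (c - phiPotential m φ x i τ)) :=
    (hψ.sub hP).congr fun s => add_sub_cancel_right _ _
  rw [leftLim_eq_of_tendsto hψ, leftLim_eq_of_tendsto hv, sub_add_cancel]

end StickyCS

/-- At every collision time `τ ∈ C`, the quantity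
`ψ_i(t) = v_i(t) + Σ_j m_j Φ(x_i(t) − x_j(t))` satisfies the barycentric collision rule
`ψ_i(τ) = (Σ_{j ∈ J_i(τ)} m_j ψ_j(τ−)) / (Σ_{j ∈ J_i(τ)} m_j)`. -/
theorem sticky_CS_psi_collision {N : ℕ} (m : Fin N → ℝ) (φ : ℝ → ℝ)
    (C : Set ℝ) (x v : Fin N → ℝ → ℝ) (h : StickyCS N m φ C x v)
    (ψ : Fin N → ℝ → ℝ)
    (hψ : ∀ i t, ψ i t = v i t + ∑ j, m j * Phi φ (x i t - x j t)) :
    ∀ τ ∈ C, ∀ i : Fin N,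
      ψ i τ = (∑ j ∈ Finset.univ.filter (fun j => x j τ = x i τ),
                  m j * Function.leftLim (ψ j) τ)
              / (∑ j ∈ Finset.univ.filter (fun j => x j τ = x i τ), m j) := by
  intro τ hτC i
  obtain rfl : ψ = fun j t => v j t + phiPotential m φ x j t := funext₂ hψ
  have hleftLim : ∀ j ∈ Finset.univ.filter (fun j => x j τ = x i τ),
      leftLim (fun t => v j t + phiPotential m φ x j t) τ
        = leftLim (v j) τ + phiPotential m φ x i τ := by
    intro j hj
    rw [h.leftLim_add_phiPotential (h.C_pos hτC) j]
    simp only [phiPotential, (Finset.mem_filter.1 hj).2]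
  have hmass : ∑ j ∈ Finset.univ.filter (fun j => x j τ = x i τ), m j ≠ 0 :=
    (Finset.sum_pos (fun j _ => h.m_pos j) ⟨i, by simp⟩).ne'
  rw [Finset.sum_congr rfl fun j hj => congrArg (m j * ·) (hleftLim j hj),
    ← sum_mul_div_sum_add _ _ _ _ hmass, ← h.collide τ hτC i]
end

section
/- Let M⁰ : ℝ → [−1/2,1/2] be nondecreasing and right-continuous with M⁰(x) = 1/2 for x ≥ R⁰ and M⁰(x) = −1/2 for x ≤ −R⁰, for some R⁰ > 0. Let m_1,…,m_N > 0 with Σ m_i = 1, set θ_i = −1/2 + Σ_{j=1}^i m_j for i = 0,…,N, let x_i⁰ = inf{x ∈ ℝ : M⁰(x) ≥ θ_i} for i = 1,…,N, and define the step function M_N⁰(x) = −1/2 + Σ_{i=1}^N m_i·1_{x ≥ x_i⁰}. Then ‖M_N⁰ − M⁰‖_{L¹(ℝ)} ≤ 2R⁰ · max_{1≤i≤N} m_i. -/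
open MeasureTheory Set

/-!
The nodes `x_i⁰` are the generalized inverse of `M⁰` at the levels `θ_i`, and right-continuity
makes this a Galois connection: `x_i⁰ ≤ x ↔ θ_i ≤ M⁰(x)`. Hence `M_N⁰(x) + 1/2` is the largest
partial sum of the masses not exceeding `M⁰(x) + 1/2`, so `0 ≤ M⁰ − M_N⁰ ≤ max_i m_i` pointwise.
Both functions equal `∓1/2` outside `[−R⁰, R⁰]`, and integrating over this interval gives the bound.
-/

theorem Monotone.csInf_setOf_le_le_iff {α β : Type*} [ConditionallyCompleteLinearOrder α]
    [TopologicalSpace α] [OrderTopology α] [DenselyOrdered α] [NoMaxOrder α]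
    [Preorder β] [TopologicalSpace β] [ClosedIciTopology β] {f : α → β} (hf : Monotone f)
    (hrc : ∀ x, ContinuousWithinAt f (Ici x) x) {θ : β} (hne : {x | θ ≤ f x}.Nonempty)
    (hbdd : BddBelow {x | θ ≤ f x}) {x : α} :
    sInf {x | θ ≤ f x} ≤ x ↔ θ ≤ f x := by
  refine ⟨fun hx => ?_, fun hx => csInf_le hbdd hx⟩
  set s := sInf {x | θ ≤ f x}
  have hs : θ ≤ f s := by
    refine _root_.ge_of_tendsto ((hrc s).mono_left (nhdsWithin_mono _ Ioi_subset_Ici_self)) ?_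
    filter_upwards [self_mem_nhdsWithin] with y hy
    obtain ⟨t, ht, hty⟩ := (csInf_lt_iff hbdd hne).1 hy
    exact ht.trans (hf hty.le)
  exact hs.trans (hf hx)

section PartialSums

variable {ι : Type*} [LinearOrder ι] [Fintype ι] [LocallyFiniteOrderBot ι] {m : ι → ℝ}

theorem sum_filter_partialSum_le (hm : ∀ i, 0 ≤ m i) {y : ℝ} (hy : 0 ≤ y) :
    ∑ i ∈ Finset.univ.filter (fun i => ∑ j ∈ Finset.Iic i, m j ≤ y), m i ≤ y := by
  set S := Finset.univ.filter (fun i => ∑ j ∈ Finset.Iic i, m j ≤ y)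
  rcases S.eq_empty_or_nonempty with hS | hS
  · simpa [hS] using hy
  have hk := (Finset.mem_filter.1 (S.max'_mem hS)).2
  calc ∑ i ∈ S, m i ≤ ∑ j ∈ Finset.Iic (S.max' hS), m j :=
        Finset.sum_le_sum_of_subset_of_nonneg (fun j hj => Finset.mem_Iic.2 (S.le_max' j hj))
          (fun j _ _ => hm j)
    _ ≤ y := hk

theorem sub_le_sum_filter_partialSum (hm : ∀ i, 0 ≤ m i) {c : ℝ} (hc : ∀ i, m i ≤ c)
    (hc0 : 0 ≤ c) {y : ℝ} (hy : y ≤ ∑ i, m i) :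
    y - c ≤ ∑ i ∈ Finset.univ.filter (fun i => ∑ j ∈ Finset.Iic i, m j ≤ y), m i := by
  set S := Finset.univ.filter (fun i => ∑ j ∈ Finset.Iic i, m j ≤ y)
  rcases (Finset.univ \ S).eq_empty_or_nonempty with hS | hS
  · rw [Finset.sdiff_eq_empty_iff_subset, Finset.univ_subset_iff] at hS
    rw [hS]
    linarith
  set k := (Finset.univ \ S).min' hS
  have hkS : k ∉ S := (Finset.mem_sdiff.1 ((Finset.univ \ S).min'_mem hS)).2
  have hIio : Finset.Iio k ⊆ S := fun j hj => by
    by_contra hjS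
    exact (Finset.mem_Iio.1 hj).not_ge ((Finset.univ \ S).min'_le j (by simpa using hjS))
  have hy_lt : y < m k + ∑ j ∈ Finset.Iio k, m j := by
    rw [← Finset.sum_insert Finset.notMem_Iio_self, Finset.Iio_insert]
    simpa [S] using hkS
  have := Finset.sum_le_sum_of_subset_of_nonneg hIio (fun j _ _ => hm j)
  linarith [hc k]

theorem abs_sum_mul_indicator_sub_le (hm : ∀ i, 0 ≤ m i) {c : ℝ} (hc : ∀ i, m i ≤ c)
    (hc0 : 0 ≤ c) {α : Type*} [LE α] [DecidableLE α] {F : α → ℝ}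
    (hF : ∀ x, F x ∈ Icc 0 (∑ i, m i)) {x0 : ι → α} (hx0 : ∀ i x, x0 i ≤ x ↔ ∑ j ∈ Finset.Iic i, m j ≤ F x) (x : α) :
    |∑ i, m i * (if x0 i ≤ x then 1 else 0) - F x| ≤ c := by
  simp only [mul_ite, mul_one, mul_zero, ← Finset.sum_filter, hx0]
  have hle := sum_filter_partialSum_le hm (hF x).1
  have hge := sub_le_sum_filter_partialSum hm hc hc0 (hF x).2
  rw [abs_le]
  constructor <;> linarith

end PartialSums

theorem norm_integral_le_of_norm_le_const_of_support_subset_Icc {E : Type*}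
    [NormedAddCommGroup E] [NormedSpace ℝ E] {f : ℝ → E} {a b c : ℝ} (hab : a ≤ b)
    (hf : ∀ x ∈ Icc a b, ‖f x‖ ≤ c) (hsupp : Function.support f ⊆ Icc a b) :
    ‖∫ x, f x‖ ≤ c * (b - a) := by
  rw [← setIntegral_eq_integral_of_forall_compl_eq_zero fun x hx =>
    Function.notMem_support.1 fun h => hx (hsupp h)]
  calc ‖∫ x in Icc a b, f x‖ ≤ c * volume.real (Icc a b) :=
        norm_setIntegral_le_of_norm_le_const measure_Icc_lt_top hf
    _ = c * (b - a) := by rw [Real.volume_real_Icc_of_le hab]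

/-- Let `M⁰ : ℝ → [−1/2,1/2]` be nondecreasing and right-continuous with
`M⁰ = 1/2` on `[R⁰,∞)` and `M⁰ = −1/2` on `(−∞,−R⁰]`. Given positive masses summing to one,
`θ_i = −1/2 + Σ_{j ≤ i} m_j` and `x_i⁰ = inf{x : M⁰(x) ≥ θ_i}`, the step function
`M_N⁰(x) = −1/2 + Σ_i m_i 1_{x ≥ x_i⁰}` satisfies
`‖M_N⁰ − M⁰‖_{L¹} ≤ 2R⁰ · max_i m_i`. -/
theorem discretized_initial_data_L1_error {N : ℕ} (hN : 0 < N)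
    (M0 : ℝ → ℝ) (R0 : ℝ) (hR0 : 0 < R0)
    (hrange : ∀ x, M0 x ∈ Icc (-(1:ℝ)/2) (1/2))
    (hmono : Monotone M0)
    (hrc : ∀ x : ℝ, ContinuousWithinAt M0 (Ici x) x)
    (hright : ∀ x : ℝ, R0 ≤ x → M0 x = 1/2)
    (hleft : ∀ x : ℝ, x ≤ -R0 → M0 x = -(1/2))
    (m : Fin N → ℝ) (hm : ∀ i, 0 < m i) (hsum : ∑ i, m i = 1)
    (θ : Fin N → ℝ) (hθ : ∀ i, θ i = -(1/2) + ∑ j ∈ Finset.Iic i, m j)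
    (x0 : Fin N → ℝ) (hx0 : ∀ i, x0 i = sInf {x : ℝ | θ i ≤ M0 x})
    (MN0 : ℝ → ℝ)
    (hMN0 : ∀ x, MN0 x = -(1/2) + ∑ i, m i * (if x0 i ≤ x then (1:ℝ) else 0)) :
    (∫ x : ℝ, |MN0 x - M0 x|)
      ≤ 2 * R0 * Finset.univ.sup' ⟨⟨0, hN⟩, Finset.mem_univ _⟩ m := by
  set c := Finset.univ.sup' ⟨⟨0, hN⟩, Finset.mem_univ _⟩ m
  have hmc : ∀ i, m i ≤ c := fun i => Finset.le_sup' m (Finset.mem_univ i)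
  have hpartial_pos : ∀ i, 0 < ∑ j ∈ Finset.Iic i, m j := fun i =>
    Finset.sum_pos (fun j _ => hm j) ⟨i, Finset.mem_Iic.2 le_rfl⟩
  have hpartial_le : ∀ i, ∑ j ∈ Finset.Iic i, m j ≤ 1 := fun i =>
    hsum ▸ Finset.sum_le_univ_sum_of_nonneg fun j => (hm j).le
  have hx0_le_iff : ∀ i x, x0 i ≤ x ↔ ∑ j ∈ Finset.Iic i, m j ≤ M0 x + 1/2 := fun i x => by
    have hθ' : θ i = ∑ j ∈ Finset.Iic i, m j - 1/2 := by rw [hθ]; ring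
    rw [hx0, hmono.csInf_setOf_le_le_iff hrc ⟨R0, ?_⟩ ⟨-R0, fun y hy => ?_⟩, hθ', sub_le_iff_le_add]
    · rw [mem_ofPred_eq, hθ', hright R0 le_rfl]
      linarith [hpartial_le i]
    · by_contra! hy'
      rw [mem_ofPred_eq, hθ', hleft y hy'.le] at hy
      linarith [hpartial_pos i]
  have hbound : ∀ x, |MN0 x - M0 x| ≤ c := fun x => by
    have := abs_sum_mul_indicator_sub_le (fun i => (hm i).le) hmc ((hm ⟨0, hN⟩).le.trans (hmc _))
      (fun x => ⟨by linarith [(hrange x).1], by linarith [(hrange x).2]⟩) hx0_le_iff x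
    rw [hMN0]
    convert this using 2
    ring
  have hsupp : Function.support (fun x => |MN0 x - M0 x|) ⊆ Icc (-R0) R0 := by
    intro x hx
    by_contra hx_out
    rw [mem_Icc, not_and_or, not_le, not_le] at hx_out
    rcases hx_out with hlt | hgt <;> apply hx
    · have hnot : ∀ i, ¬ x0 i ≤ x := fun i => by
        rw [hx0_le_iff, hleft x hlt.le]
        linarith [hpartial_pos i]
      simp [hMN0, hnot, hleft x hlt.le]
    · have hall : ∀ i, x0 i ≤ x := fun i => by
        rw [hx0_le_iff, hright x hgt.le]
        linarith [hpartial_le i]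
      norm_num [hMN0, hall, hsum, hright x hgt.le]
  calc (∫ x, |MN0 x - M0 x|) ≤ ‖∫ x, |MN0 x - M0 x|‖ := le_abs_self _
    _ ≤ c * (R0 - -R0) := norm_integral_le_of_norm_le_const_of_support_subset_Icc (by linarith)
        (fun x _ => by simpa using hbound x) hsupp
    _ = 2 * R0 * c := by ring
end

section
/- Let ρ⁰ be a compactly supported Borel probability measure on ℝ with diam(supp ρ⁰) = D⁰ > 0, and let M⁰(x) = ρ⁰((−∞,x]) − 1/2. Then for every N ≥ 1 there exist masses m_1,…,m_N > 0 with Σ m_i = 1 and points x_1⁰ ≤ … ≤ x_N⁰ such that, setting M_N⁰(x) = −1/2 + Σ_{i=1}^N m_i·1_{x ≥ x_i⁰}, one has both ‖M⁰ − M_N⁰‖_{L¹(ℝ)} ≤ D⁰/N and sup_{m ∈ (−1/2, 1/2]} |(M⁰)^{−1}(m) − (M_N⁰)^{−1}(m)| ≤ D⁰/N, where for a nondecreasing function G the generalized inverse is G^{−1}(m) = inf{x ∈ ℝ : G(x) ≥ m}. -/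
/-!
Cut `[a, b]`, the convex hull of the support, into `N` cells `[yᵢ, yᵢ₊₁)` of length `D⁰/N` and
put at `yᵢ` the mass `ρ((yᵢ, yᵢ₊₁])` (the first cell also gets the atom at `a`). On each cell
`M⁰` and `M_N⁰` then lie between the same two consecutive levels `Lᵢ ≤ Lᵢ₊₁`, so
`|M⁰ - M_N⁰| ≤ Lᵢ₊₁ - Lᵢ` there and the L¹ error is at most `Σ (Lᵢ₊₁ - Lᵢ) · D⁰/N = D⁰/N`; and for
`Lᵢ < q ≤ Lᵢ₊₁` both generalized inverses lie in `[yᵢ, yᵢ₊₁]`. Finally, atoms of zero mass are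
moved onto a neighbouring atom, whose mass they share, to make all masses positive.
-/

open MeasureTheory Set
open scoped Classical

/-- The topological support of a Borel measure on `ℝ`: the set of points all of whose
neighborhoods have positive measure. -/
def msupport (ρ : Measure ℝ) : Set ℝ := {x : ℝ | ∀ U ∈ nhds x, ρ U ≠ 0}

/-- The generalized inverse of a nondecreasing function: `G⁻¹(q) = inf{x : G(x) ≥ q}`. -/
noncomputable def genInv (G : ℝ → ℝ) (q : ℝ) : ℝ := sInf {x : ℝ | q ≤ G x}

lemma Nat.exists_lt_not_and_succ {P : ℕ → Prop} {N : ℕ} (h0 : ¬P 0) (hN : P N) :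
    ∃ i < N, ¬P i ∧ P (i + 1) := by
  induction N with
  | zero => exact absurd hN h0
  | succ n ih =>
    by_cases hn : P n
    · obtain ⟨i, hi, h⟩ := ih hn
      exact ⟨i, by omega, h⟩
    · exact ⟨n, by omega, hn, hN⟩

lemma Finset.exists_monotone_retraction {ι : Type*} [LinearOrder ι] (S : Finset ι)
    (hS : S.Nonempty) : ∃ c : ι → ι, Monotone c ∧ (∀ i, c i ∈ S) ∧ ∀ j ∈ S, c j = j := by
  let c i := S.sup' hS fun j => if j ≤ i then j else S.min' hS
  refine ⟨c, fun i i' hii' => ?_, fun i => ?_, fun j hj => ?_⟩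
  · refine Finset.sup'_mono_fun fun j hj => ?_
    split_ifs with h h'
    exacts [le_rfl, absurd (h.trans hii') h', S.min'_le j hj, le_rfl]
  · obtain ⟨j, hj, hcj⟩ := S.exists_mem_eq_sup' hS fun j => if j ≤ i then j else S.min' hS
    simp only [c, hcj]
    split_ifs
    exacts [hj, S.min'_mem hS]
  · refine le_antisymm (Finset.sup'_le _ _ fun k hk => ?_) (Finset.le_sup'_of_le _ hj (by simp))
    split_ifs with hkj
    exacts [hkj, S.min'_le j hj]

theorem exists_pos_weights_sum_comp_eq {ι α : Type*} [LinearOrder ι] [Fintype ι] [Preorder α]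
    (μ : ι → ℝ) (z : ι → α) (hμ : ∀ i, 0 ≤ μ i) (hμ_pos : 0 < ∑ i, μ i) (hz : Monotone z) :
    ∃ (m : ι → ℝ) (x : ι → α), (∀ i, 0 < m i) ∧ Monotone x ∧
      ∀ g : α → ℝ, ∑ i, m i * g (x i) = ∑ j, μ j * g (z j) := by
  -- Each atom is sent to the nearest atom of positive mass on its left (or, if there is none, to
  -- the first one), and that atom's mass is shared equally among the atoms sent to it.
  let S := Finset.univ.filter fun j => 0 < μ j
  have hS : S.Nonempty := by
    obtain ⟨j, -, hj⟩ := Finset.exists_lt_of_sum_lt (f := fun _ => (0 : ℝ)) (s := Finset.univ)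
      (g := μ) (by simpa using hμ_pos)
    exact ⟨j, by simpa [S] using hj⟩
  obtain ⟨c, hc_mono, hc_mem, hc_id⟩ := S.exists_monotone_retraction hS
  let fiber j := Finset.univ.filter fun i => c i = j
  have hfiber : ∀ j, (fiber j).card = 0 → μ j = 0 := by
    intro j hj
    by_contra hμj
    have hjS : j ∈ S := by simpa [S] using (hμ j).lt_of_ne' hμj
    simp only [fiber, Finset.card_eq_zero, Finset.filter_eq_empty_iff] at hj
    exact hj (Finset.mem_univ j) (hc_id j hjS)
  refine ⟨fun i => μ (c i) / (fiber (c i)).card, fun i => z (c i), fun i => ?_,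
    hz.comp hc_mono, fun g => ?_⟩
  · have hμc : 0 < μ (c i) := by simpa [S] using hc_mem i
    have hcard : 0 < (fiber (c i)).card := Finset.card_pos.2 ⟨i, by simp [fiber]⟩
    positivity
  · rw [← Finset.sum_fiberwise Finset.univ c]
    refine Finset.sum_congr rfl fun j _ => ?_
    calc ∑ i ∈ fiber j, μ (c i) / (fiber (c i)).card * g (z (c i))
        = ∑ i ∈ fiber j, μ j / (fiber j).card * g (z j) :=
          Finset.sum_congr rfl fun i hi => by rw [(Finset.mem_filter.1 hi).2]
      _ = μ j * g (z j) := by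
          rw [Finset.sum_const, nsmul_eq_mul]
          rcases eq_or_ne (fiber j).card 0 with h | h
          · simp [h, hfiber j h]
          · field_simp

/-- On every cell `[y i, y (i + 1))` of the grid, `f` takes values in `[L i, L (i + 1)]`;
left of the grid it equals `L 0` and right of it `L N`. -/
structure IsSqueezedOnGrid (y L : ℕ → ℝ) (N : ℕ) (f : ℝ → ℝ) : Prop where
  mem_Icc : ∀ x, f x ∈ Icc (L 0) (L N)
  le_of_le : ∀ i ≤ N, ∀ x, y i ≤ x → L i ≤ f x
  le_of_lt : ∀ i ≤ N, ∀ x, x < y i → f x ≤ L i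

noncomputable def gridStep (y L : ℕ → ℝ) (N : ℕ) (x : ℝ) : ℝ :=
  L 0 + ∑ j ∈ Finset.range N, (L (j + 1) - L j) * if y j ≤ x then 1 else 0

namespace IsSqueezedOnGrid

variable {y L : ℕ → ℝ} {N : ℕ} {f g : ℝ → ℝ}

lemma eq_of_lt (hf : IsSqueezedOnGrid y L N f) {x : ℝ} (hx : x < y 0) : f x = L 0 :=
  le_antisymm (hf.le_of_lt 0 N.zero_le x hx) (hf.mem_Icc x).1

lemma eq_of_le (hf : IsSqueezedOnGrid y L N f) {x : ℝ} (hx : y N ≤ x) : f x = L N :=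
  le_antisymm (hf.mem_Icc x).2 (hf.le_of_le N le_rfl x hx)

lemma abs_sub_le_sum_indicator (hf : IsSqueezedOnGrid y L N f) (hg : IsSqueezedOnGrid y L N g)
    (hL : Monotone L) (x : ℝ) :
    |f x - g x| ≤
      ∑ i ∈ Finset.range N, (Ico (y i) (y (i + 1))).indicator (fun _ => L (i + 1) - L i) x := by
  have hterm : ∀ i, 0 ≤ (Ico (y i) (y (i + 1))).indicator (fun _ => L (i + 1) - L i) x :=
    fun i => indicator_nonneg (fun _ _ => sub_nonneg.2 (hL i.le_succ)) x
  have hsum := Finset.sum_nonneg fun i (_ : i ∈ Finset.range N) => hterm i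
  rcases lt_or_ge x (y 0) with hx0 | hx0
  · simpa [hf.eq_of_lt hx0, hg.eq_of_lt hx0] using hsum
  rcases le_or_gt (y N) x with hxN | hxN
  · simpa [hf.eq_of_le hxN, hg.eq_of_le hxN] using hsum
  obtain ⟨i, hiN, hyi, hyi'⟩ :=
    Nat.exists_lt_not_and_succ (P := fun k => x < y k) hx0.not_gt hxN
  have hcell : |f x - g x| ≤ L (i + 1) - L i := by
    rw [abs_sub_le_iff]
    have := hf.le_of_le i hiN.le x (not_lt.1 hyi)
    have := hf.le_of_lt (i + 1) hiN x hyi'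
    have := hg.le_of_le i hiN.le x (not_lt.1 hyi)
    have := hg.le_of_lt (i + 1) hiN x hyi'
    constructor <;> linarith
  calc |f x - g x| ≤ (Ico (y i) (y (i + 1))).indicator (fun _ => L (i + 1) - L i) x := by
        rwa [indicator_of_mem (show x ∈ Ico (y i) (y (i + 1)) from ⟨not_lt.1 hyi, hyi'⟩)]
    _ ≤ _ := Finset.single_le_sum (fun j _ => hterm j) (Finset.mem_range.2 hiN)

lemma integral_abs_sub_le (hf : IsSqueezedOnGrid y L N f) (hg : IsSqueezedOnGrid y L N g)
    (hL : Monotone L) {δ : ℝ} (hδ : 0 ≤ δ) (hy : ∀ i, y (i + 1) = y i + δ) :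
    ∫ x, |f x - g x| ≤ δ * (L N - L 0) := by
  have hint : ∀ i, Integrable ((Ico (y i) (y (i + 1))).indicator fun _ => L (i + 1) - L i) :=
    fun i => (integrable_indicator_iff measurableSet_Ico).2
      (integrableOn_const measure_Ico_lt_top.ne)
  calc ∫ x, |f x - g x|
      ≤ ∫ x, ∑ i ∈ Finset.range N, (Ico (y i) (y (i + 1))).indicator (fun _ => L (i + 1) - L i) x :=
        integral_mono_of_nonneg (.of_forall fun x => abs_nonneg _)
          (integrable_finsetSum _ fun i _ => hint i)
          (.of_forall (hf.abs_sub_le_sum_indicator hg hL))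
    _ = ∑ i ∈ Finset.range N, (L (i + 1) - L i) * δ := by
        rw [integral_finsetSum _ fun i _ => hint i]
        refine Finset.sum_congr rfl fun i _ => ?_
        rw [integral_indicator_const _ measurableSet_Ico, hy,
          Real.volume_real_Ico_of_le (by linarith), smul_eq_mul]
        ring
    _ = δ * (L N - L 0) := by rw [← Finset.sum_mul, Finset.sum_range_sub, mul_comm]

lemma genInv_mem_Icc (hf : IsSqueezedOnGrid y L N f) {i : ℕ} (hi : i < N) {q : ℝ}
    (hqi : L i < q) (hqi' : q ≤ L (i + 1)) : genInv f q ∈ Icc (y i) (y (i + 1)) := by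
  have hmem : y (i + 1) ∈ {x | q ≤ f x} := hqi'.trans (hf.le_of_le (i + 1) hi _ le_rfl)
  have hlow : y i ∈ lowerBounds {x | q ≤ f x} := fun x hx =>
    not_lt.1 fun hxi => (hqi.trans_le hx).not_ge (hf.le_of_lt i hi.le x hxi)
  exact ⟨le_csInf ⟨_, hmem⟩ hlow, csInf_le ⟨_, hlow⟩ hmem⟩

lemma abs_genInv_sub_le (hf : IsSqueezedOnGrid y L N f) (hg : IsSqueezedOnGrid y L N g)
    {δ : ℝ} (hy : ∀ i, y (i + 1) = y i + δ) {q : ℝ} (hq : q ∈ Ioc (L 0) (L N)) :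
    |genInv f q - genInv g q| ≤ δ := by
  obtain ⟨i, hiN, hqi, hqi'⟩ :=
    Nat.exists_lt_not_and_succ (P := fun k => q ≤ L k) hq.1.not_ge hq.2
  have := Real.dist_le_of_mem_Icc (hf.genInv_mem_Icc hiN (not_le.1 hqi) hqi')
    (hg.genInv_mem_Icc hiN (not_le.1 hqi) hqi')
  rwa [Real.dist_eq, hy, add_sub_cancel_left] at this

end IsSqueezedOnGrid

lemma isSqueezedOnGrid_gridStep {y L : ℕ → ℝ} (N : ℕ) (hy : Monotone y) (hL : Monotone L) :
    IsSqueezedOnGrid y L N (gridStep y L N) := by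
  let jump (x : ℝ) (j : ℕ) : ℝ := (L (j + 1) - L j) * if y j ≤ x then 1 else 0
  have hstep : ∀ x, gridStep y L N x = L 0 + ∑ j ∈ Finset.range N, jump x j := fun x => rfl
  have hjump_nonneg : ∀ x j, 0 ≤ jump x j := fun x j =>
    mul_nonneg (sub_nonneg.2 (hL j.le_succ)) (by split_ifs <;> norm_num)
  have hjump_le : ∀ x j, jump x j ≤ L (j + 1) - L j := fun x j => by
    simp only [jump]
    split_ifs
    · simp
    · simpa using hL j.le_succ
  have hpartial : ∀ i ≤ N, ∀ x, ∑ j ∈ Finset.range i, jump x j ≤ L i - L 0 := fun i _ x =>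
    (Finset.sum_le_sum fun j _ => hjump_le x j).trans_eq (Finset.sum_range_sub L i)
  refine ⟨fun x => ⟨?_, ?_⟩, fun i hi x hx => ?_, fun i hi x hx => ?_⟩
  · exact le_add_of_nonneg_right (Finset.sum_nonneg fun j _ => hjump_nonneg x j)
  · linarith [hstep x, hpartial N le_rfl x]
  · have hfull : ∑ j ∈ Finset.range i, jump x j = L i - L 0 := by
      rw [← Finset.sum_range_sub L i]
      refine Finset.sum_congr rfl fun j hj => ?_
      simp only [jump, if_pos ((hy (Finset.mem_range.1 hj).le).trans hx), mul_one]
    have := Finset.sum_le_sum_of_subset_of_nonneg (Finset.range_subset_range.2 hi)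
      fun j _ _ => hjump_nonneg x j
    linarith [hstep x]
  · have htail : ∑ j ∈ Finset.range i, jump x j = ∑ j ∈ Finset.range N, jump x j := by
      refine Finset.sum_subset (Finset.range_subset_range.2 hi) fun j _ hj => ?_
      simp only [jump, if_neg (not_le.2 (hx.trans_le (hy (not_lt.1 (Finset.mem_range.not.1 hj))))),
        mul_zero]
    linarith [hstep x, hpartial i hi x]

lemma Monotone.isSqueezedOnGrid {y : ℕ → ℝ} {N : ℕ} (hN : N ≠ 0) {f : ℝ → ℝ} (hf : Monotone f)
    {c : ℝ} (hc : ∀ x, c ≤ f x) (hc' : ∀ x < y 0, f x ≤ c) (htop : ∀ x, f x ≤ f (y N)) :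
    IsSqueezedOnGrid y (fun i => if i = 0 then c else f (y i)) N f := by
  refine ⟨fun x => ⟨hc x, by simpa [hN] using htop x⟩, fun i _ x hx => ?_, fun i _ x hx => ?_⟩
  · split_ifs
    exacts [hc x, hf hx]
  · split_ifs with hi
    exacts [hc' x (hi ▸ hx), hf hx.le]

lemma exists_pos_weights_eq_gridStep {y L : ℕ → ℝ} {N : ℕ} (hy : Monotone y) (hL : Monotone L)
    (hL_lt : L 0 < L N) :
    ∃ m x0 : Fin N → ℝ, (∀ i, 0 < m i) ∧ ∑ i, m i = L N - L 0 ∧ Monotone x0 ∧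
      ∀ x, L 0 + ∑ i, m i * (if x0 i ≤ x then 1 else 0) = gridStep y L N x := by
  have hjumps : ∑ j : Fin N, (L (j + 1) - L j) = L N - L 0 := by
    rw [Fin.sum_univ_eq_sum_range (fun j => L (j + 1) - L j), Finset.sum_range_sub]
  obtain ⟨m, x0, hm_pos, hx0, hm⟩ := exists_pos_weights_sum_comp_eq
    (fun j : Fin N => L (j + 1) - L j) (fun j => y j) (fun j => sub_nonneg.2 (hL j.1.le_succ))
    (by rwa [hjumps, sub_pos]) (fun i j hij => hy hij)
  refine ⟨m, x0, hm_pos, ?_, hx0, fun x => ?_⟩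
  · simpa [hjumps] using hm fun _ => 1
  · rw [hm fun t => if t ≤ x then 1 else 0,
      Fin.sum_univ_eq_sum_range (fun j => (L (j + 1) - L j) * if y j ≤ x then 1 else 0)]
    rfl

section Cdf

variable {ρ : Measure ℝ} [IsProbabilityMeasure ρ] {y : ℕ → ℝ} {N : ℕ}

lemma monotone_measure_Iic_toReal : Monotone fun x => (ρ (Iic x)).toReal := fun _ _ hxx' =>
  ENNReal.toReal_mono (measure_ne_top ρ _) (measure_mono (Iic_subset_Iic.2 hxx'))

lemma measure_Iic_eq_one_of_measure_Ioi {t : ℝ} (ht : ρ (Ioi t) = 0) : ρ (Iic t) = 1 :=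
  prob_compl_eq_zero_iff measurableSet_Iic |>.1 (by rwa [compl_Iic])

lemma monotone_levels_measure_Iic (c : ℝ) (hy : Monotone y) :
    Monotone fun i => if i = 0 then -c else (ρ (Iic (y i))).toReal - c :=
  monotone_nat_of_le_succ fun i => by
    rcases eq_or_ne i 0 with rfl | hi
    · simp
    · simpa [hi] using monotone_measure_Iic_toReal (ρ := ρ) (hy i.le_succ)

lemma isSqueezedOnGrid_measure_Iic (c : ℝ) (hN : N ≠ 0) (h0 : ρ (Iio (y 0)) = 0)
    (hN' : ρ (Ioi (y N)) = 0) :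
    IsSqueezedOnGrid y (fun i => if i = 0 then -c else (ρ (Iic (y i))).toReal - c) N
      fun x => (ρ (Iic x)).toReal - c := by
  refine (monotone_measure_Iic_toReal.add_const (-c)).isSqueezedOnGrid hN (fun x => ?_)
    (fun x hx => ?_) (fun x => ?_)
  · simp
  · simp [measure_mono_null (Iic_subset_Iio.2 hx) h0]
  · have := measureReal_le_one (μ := ρ) (s := Iic x)
    rw [measureReal_def] at this
    simp only [measure_Iic_eq_one_of_measure_Ioi hN', ENNReal.toReal_one]
    linarith

end Cdf

lemma msupport_eq_support (ρ : Measure ℝ) : msupport ρ = ρ.support := by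
  ext x
  simp [msupport, Measure.mem_support_iff_forall, pos_iff_ne_zero]

lemma measure_Iio_sInf_support {ρ : Measure ℝ} (h : BddBelow ρ.support) :
    ρ (Iio (sInf ρ.support)) = 0 :=
  measure_mono_null (fun _ hx hxs => (csInf_le h hxs).not_gt hx) Measure.measure_compl_support

lemma measure_Ioi_sSup_support {ρ : Measure ℝ} (h : BddAbove ρ.support) :
    ρ (Ioi (sSup ρ.support)) = 0 :=
  measure_mono_null (fun _ hx hxs => (le_csSup h hxs).not_gt hx) Measure.measure_compl_support

theorem wellprepared_discretization_general (ρ : Measure ℝ) [IsProbabilityMeasure ρ]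
    (hcomp : IsCompact (msupport ρ))
    (D0 : ℝ) (hD0 : D0 = Metric.diam (msupport ρ))
    (M0 : ℝ → ℝ) (hM0 : ∀ x, M0 x = (ρ (Iic x)).toReal - 1/2)
    (N : ℕ) (hN : 0 < N) :
    ∃ m x0 : Fin N → ℝ,
      (∀ i, 0 < m i) ∧ (∑ i, m i = 1) ∧
      (∀ i j : Fin N, i ≤ j → x0 i ≤ x0 j) ∧
      (∫ x : ℝ,
          |M0 x - (-(1/2) + ∑ i, m i * (if x0 i ≤ x then (1:ℝ) else 0))|) ≤ D0 / N ∧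
      ∀ q ∈ Ioc (-(1:ℝ)/2) (1/2),
        |genInv M0 q
          - genInv (fun x => -(1/2) + ∑ i, m i * (if x0 i ≤ x then (1:ℝ) else 0)) q|
        ≤ D0 / N := by
  obtain rfl : M0 = fun x => (ρ (Iic x)).toReal - 1 / 2 := funext hM0
  rw [msupport_eq_support] at hcomp hD0
  have hbdd := hcomp.isBounded
  set δ := D0 / N
  have hδ : 0 ≤ δ := div_nonneg (hD0 ▸ Metric.diam_nonneg) N.cast_nonneg
  set y : ℕ → ℝ := fun i => sInf ρ.support + i * δ
  have hy_succ : ∀ i, y (i + 1) = y i + δ := fun i => by simp only [y]; push_cast; ring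
  have hy : Monotone y := monotone_nat_of_le_succ fun i => by rw [hy_succ]; linarith
  have hyN : y N = sSup ρ.support := by
    simp only [y, δ, hD0, Real.diam_eq hbdd]
    field_simp
    ring
  have hρN : ρ (Ioi (y N)) = 0 := hyN ▸ measure_Ioi_sSup_support hbdd.bddAbove
  set L : ℕ → ℝ := fun i => if i = 0 then -(1 / 2) else (ρ (Iic (y i))).toReal - 1 / 2
  have hL : Monotone L := monotone_levels_measure_Iic _ hy
  have hL0 : L 0 = -(1 / 2) := if_pos rfl
  have hLN : L N = 1 / 2 := by
    simp only [L, if_neg hN.ne', measure_Iic_eq_one_of_measure_Ioi hρN]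
    norm_num
  have hcdf : IsSqueezedOnGrid y L N _ := isSqueezedOnGrid_measure_Iic (1 / 2) hN.ne'
    (by simpa [y] using measure_Iio_sInf_support hbdd.bddBelow) hρN
  have hgrid := isSqueezedOnGrid_gridStep N hy hL
  obtain ⟨m, x0, hm_pos, hm_sum, hx0, hstep⟩ :=
    exists_pos_weights_eq_gridStep (N := N) hy hL (by linarith)
  rw [hL0] at hstep
  refine ⟨m, x0, hm_pos, by linarith, fun i j hij => hx0 hij, ?_, fun q hq => ?_⟩
  · simp only [hstep]
    exact (hcdf.integral_abs_sub_le hgrid hL hδ hy_succ).trans_eq (by rw [hL0, hLN]; ring)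
  · simp only [hstep]
    refine hcdf.abs_genInv_sub_le hgrid hy_succ ?_
    rwa [hL0, hLN, ← neg_div]

/-- **well-prepared discretization.** Let `ρ⁰` be a compactly supported
probability measure with `diam(supp ρ⁰) = D⁰ > 0` and cumulative function
`M⁰(x) = ρ⁰((−∞,x]) − 1/2`. For every `N ≥ 1` there are positive masses summing to one and
ordered points such that the step function `M_N⁰(x) = −1/2 + Σ_i m_i 1_{x ≥ x_i⁰}` satisfies
both `‖M⁰ − M_N⁰‖_{L¹} ≤ D⁰/N` and
`sup_{q ∈ (−1/2,1/2]} |(M⁰)⁻¹(q) − (M_N⁰)⁻¹(q)| ≤ D⁰/N`. -/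
theorem wellprepared_discretization (ρ : Measure ℝ) [IsProbabilityMeasure ρ]
    (hcomp : IsCompact (msupport ρ))
    (D0 : ℝ) (hD0 : D0 = Metric.diam (msupport ρ)) (hD0pos : 0 < D0)
    (M0 : ℝ → ℝ) (hM0 : ∀ x, M0 x = (ρ (Iic x)).toReal - 1/2)
    (N : ℕ) (hN : 0 < N) :
    ∃ m x0 : Fin N → ℝ,
      (∀ i, 0 < m i) ∧ (∑ i, m i = 1) ∧
      (∀ i j : Fin N, i ≤ j → x0 i ≤ x0 j) ∧
      (∫ x : ℝ,
          |M0 x - (-(1/2) + ∑ i, m i * (if x0 i ≤ x then (1:ℝ) else 0))|) ≤ D0 / N ∧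
      ∀ q ∈ Ioc (-(1:ℝ)/2) (1/2),
        |genInv M0 q
          - genInv (fun x => -(1/2) + ∑ i, m i * (if x0 i ≤ x then (1:ℝ) else 0)) q|
        ≤ D0 / N :=
  wellprepared_discretization_general ρ hcomp D0 hD0 M0 hM0 N hN
end

section
/- Let ρ be a compactly supported Borel probability measure on ℝ and let ε > 0. Then there exists a constant c > 0, depending only on ρ and ε, such that for every compactly supported Borel probability measure ρ̃ on ℝ with diam(supp ρ̃) ≤ diam(supp ρ) − ε, there is a function f : ℝ → ℝ with Lipschitz constant at most 1 satisfying |∫_ℝ f dρ − ∫_ℝ f dρ̃| ≥ c. (Equivalently, the Wasserstein-1 distance, defined as W₁(ρ,ρ̃) = sup over 1-Lipschitz f of |∫ f dρ − ∫ f dρ̃|, satisfies W₁(ρ,ρ̃) ≥ c.) -/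
/-!
Let `a, b` realise the diameter of `supp ρ`. If `diam (supp ρ') ≤ diam (supp ρ) - ε`, then
`dist a b ≤ infDist a S' + diam S' + infDist b S'` forces one of `a, b`, say `z`, to lie at
distance `≥ ε / 2` from `S' = supp ρ'`. The `1`-Lipschitz function `min (infDist · S') (ε / 4)`
vanishes on `S'`, so integrates to `0` against `ρ'`, and equals `ε / 4` on the ball of radius
`ε / 4` around `z`, so its `ρ`-integral is at least `ε / 4 · ρ (ball z (ε / 4))`.
-/

open MeasureTheory Set

open Metric

lemma msupport_compl_null (ρ : Measure ℝ) : ρ (msupport ρ)ᶜ = 0 := by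
  refine measure_null_of_locally_null _ fun x hx => ?_
  simp only [msupport, mem_compl_iff, mem_ofPred_eq, not_forall, not_not] at hx
  obtain ⟨U, hU, hU0⟩ := hx
  exact ⟨U, mem_nhdsWithin_of_mem_nhds hU, hU0⟩

lemma msupport_nonempty (ρ : Measure ℝ) [NeZero ρ] : (msupport ρ).Nonempty := by
  by_contra h
  have hnull := msupport_compl_null ρ
  rw [not_nonempty_iff_eq_empty.mp h, compl_empty, Measure.measure_univ_eq_zero] at hnull
  exact NeZero.ne ρ hnull

lemma measureReal_ball_pos_of_mem_msupport {ρ : Measure ℝ} [IsFiniteMeasure ρ] {x r : ℝ}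
    (hx : x ∈ msupport ρ) (hr : 0 < r) : 0 < ρ.real (ball x r) :=
  ENNReal.toReal_pos (hx _ (ball_mem_nhds x hr)) (measure_ne_top ρ _)

lemma integral_eq_zero_of_eqOn_msupport {ρ : Measure ℝ} {f : ℝ → ℝ}
    (hf : EqOn f 0 (msupport ρ)) : ∫ x, f x ∂ρ = 0 := by
  refine integral_eq_zero_of_ae (measure_mono_null (fun x hx => ?_) (msupport_compl_null ρ))
  exact fun hxS => hx (hf hxS)

section PseudoMetric

variable {X : Type*} [PseudoMetricSpace X]

lemma IsCompact.exists_mem_mem_diam_le_dist {s : Set X} (hs : IsCompact s) (hne : s.Nonempty) :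
    ∃ a ∈ s, ∃ b ∈ s, diam s ≤ dist a b := by
  obtain ⟨p, ⟨ha, hb⟩, hmax⟩ :=
    (hs.prod hs).exists_isMaxOn (hne.prod hne) continuous_dist.continuousOn
  exact ⟨p.1, ha, p.2, hb,
    diam_le_of_forall_dist_le dist_nonneg fun x hx y hy => hmax (mk_mem_prod hx hy)⟩

lemma dist_le_infDist_add_diam_add_infDist {s : Set X} (hs : Bornology.IsBounded s)
    (hne : s.Nonempty) (a b : X) : dist a b ≤ infDist a s + diam s + infDist b s := by
  have hinf : dist a b - (infDist a s + diam s) ≤ infDist b s := by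
    refine (le_infDist hne).mpr fun y hy => ?_
    have := dist_le_infDist_add_diam (x := a) hs hy
    linarith [dist_triangle a y b, dist_comm y b]
  linarith

lemma half_le_infDist_or_half_le_infDist {s : Set X} (hs : Bornology.IsBounded s)
    (hne : s.Nonempty) {a b : X} {ε : ℝ} (h : diam s + ε ≤ dist a b) :
    ε / 2 ≤ infDist a s ∨ ε / 2 ≤ infDist b s := by
  by_contra! hnear
  linarith [dist_le_infDist_add_diam_add_infDist hs hne a b]

lemma mul_measureReal_ball_le_integral_min_infDist [MeasurableSpace X] [OpensMeasurableSpace X]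
    (μ : Measure X) [IsFiniteMeasure μ] (s : Set X) {z : X} {r : ℝ} (hr : 0 ≤ r)
    (hz : 2 * r ≤ infDist z s) : r * μ.real (ball z r) ≤ ∫ x, min (infDist x s) r ∂μ := by
  have hlip : LipschitzWith 1 fun x => min (infDist x s) r := (lipschitz_infDist_pt s).min_const r
  have hint : Integrable (fun x => min (infDist x s) r) μ := by
    refine .of_bound hlip.continuous.aestronglyMeasurable r (ae_of_all _ fun x => ?_)
    rw [Real.norm_of_nonneg (le_min infDist_nonneg hr)]
    exact min_le_right _ _
  have hball : ∀ x ∈ ball z r, r ≤ min (infDist x s) r := fun x hx =>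
    le_min (by linarith [mem_ball'.mp hx, infDist_le_infDist_add_dist (x := z) (y := x) (s := s)])
      le_rfl
  calc r * μ.real (ball z r) ≤ ∫ x in ball z r, min (infDist x s) r ∂μ :=
        setIntegral_ge_of_const_le_real measurableSet_ball (measure_ne_top _ _) hball
          hint.integrableOn
    _ ≤ ∫ x, min (infDist x s) r ∂μ :=
        setIntegral_le_integral hint (ae_of_all _ fun x => le_min infDist_nonneg hr)

end PseudoMetric

/-- **Wasserstein separation of diameters.** Let `ρ` be a compactly supported
probability measure on `ℝ` and `ε > 0`. There is `c > 0`, depending only on `ρ` and `ε`,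
such that every compactly supported probability measure `ρ̃` with
`diam(supp ρ̃) ≤ diam(supp ρ) − ε` admits a `1`-Lipschitz `f` with
`|∫ f dρ − ∫ f dρ̃| ≥ c`; in particular `W₁(ρ, ρ̃) ≥ c`. -/
theorem wasserstein_lower_bound_of_diam_defect
    (ρ : Measure ℝ) [IsProbabilityMeasure ρ] (hρ : IsCompact (msupport ρ))
    (ε : ℝ) (hε : 0 < ε) :
    ∃ c : ℝ, 0 < c ∧
      ∀ ρ' : Measure ℝ, IsProbabilityMeasure ρ' → IsCompact (msupport ρ') →
        Metric.diam (msupport ρ') ≤ Metric.diam (msupport ρ) - ε →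
        ∃ f : ℝ → ℝ, LipschitzWith 1 f ∧
          c ≤ |(∫ y, f y ∂ρ) - ∫ y, f y ∂ρ'| := by
  obtain ⟨a, ha, b, hb, hab⟩ := hρ.exists_mem_mem_diam_le_dist (msupport_nonempty ρ)
  have hr : 0 < ε / 4 := by positivity
  refine ⟨ε / 4 * min (ρ.real (ball a (ε / 4))) (ρ.real (ball b (ε / 4))),
    mul_pos hr (lt_min (measureReal_ball_pos_of_mem_msupport ha hr)
      (measureReal_ball_pos_of_mem_msupport hb hr)), fun ρ' _ hρ' hdiam => ?_⟩
  refine ⟨fun x => min (infDist x (msupport ρ')) (ε / 4),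
    (lipschitz_infDist_pt _).min_const _, ?_⟩
  have hvanish : ∫ x, min (infDist x (msupport ρ')) (ε / 4) ∂ρ' = 0 :=
    integral_eq_zero_of_eqOn_msupport fun x hx => by simp [infDist_zero_of_mem hx, hr.le]
  rw [hvanish, sub_zero]
  refine le_trans ?_ (le_abs_self _)
  rcases half_le_infDist_or_half_le_infDist hρ'.isBounded (msupport_nonempty ρ')
      (by linarith : diam (msupport ρ') + ε ≤ dist a b) with hfar | hfar
  · exact (mul_le_mul_of_nonneg_left (min_le_left _ _) hr.le).trans
      (mul_measureReal_ball_le_integral_min_infDist ρ _ hr.le (by linarith))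
  · exact (mul_le_mul_of_nonneg_left (min_le_right _ _) hr.le).trans
      (mul_measureReal_ball_le_integral_min_infDist ρ _ hr.le (by linarith))
end

section
/- Let ρ be a Borel probability measure on ℝ with support contained in [−R, R], let M(x) = ρ((−∞,x]) − 1/2, let φ : ℝ → [0,∞) be even and locally integrable, and let Φ(x) = ∫_0^x φ(y)dy. Then for every x ∈ [−R, R], ∫_{−2R}^{2R} φ(z) M(x − z) dz = ∫_ℝ Φ(x − y) dρ(y). -/
open MeasureTheory Set

/-!
Write `M(x - z) = ∫ (𝟙[y ≤ x - z] - 1/2) dρ(y)` and swap the two integrals (Fubini). For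
`y ∈ [-R, R]` the point `t = x - y` lies in `[-2R, 2R]`, and the inner integral becomes
`∫_{-2R}^{t} φ - ½ ∫_{-2R}^{2R} φ`; since `φ` is even, `½ ∫_{-2R}^{2R} φ = ∫_{-2R}^0 φ`, so
this is `∫_0^t φ = Φ(x - y)`.
-/

noncomputable def centeredStep (t z : ℝ) : ℝ :=
  (Iic t).indicator 1 z - 1 / 2

lemma centeredStep_sub_comm (x y z : ℝ) : centeredStep (x - y) z = centeredStep (x - z) y := by
  simp only [centeredStep, indicator_apply, mem_Iic, le_sub_comm, Pi.one_apply]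

lemma norm_centeredStep_le (t z : ℝ) : ‖centeredStep t z‖ ≤ 1 := by
  by_cases h : z ≤ t <;> norm_num [centeredStep, indicator_apply, h]

lemma measurable_centeredStep : Measurable (Function.uncurry centeredStep) := by
  have : Function.uncurry centeredStep = {p : ℝ × ℝ | p.2 ≤ p.1}.indicator 1 - fun _ => 1 / 2 := by
    ext ⟨t, z⟩
    simp [centeredStep, indicator_apply]
  rw [this]
  exact (measurable_const.indicator (measurableSet_le measurable_snd measurable_fst)).sub
    measurable_const

lemma integral_centeredStep (ρ : Measure ℝ) [IsProbabilityMeasure ρ] (t : ℝ) :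
    ∫ y, centeredStep t y ∂ρ = ρ.real (Iic t) - 1 / 2 := by
  simp only [centeredStep]
  rw [integral_sub ((integrable_const 1).indicator measurableSet_Iic)
    (integrable_const _), integral_indicator_one measurableSet_Iic]
  simp

section EvenFunction

variable {φ : ℝ → ℝ}

lemma intervalIntegral_neg_zero_of_even (hφ : ∀ z, φ (-z) = φ z) (c : ℝ) :
    ∫ z in -c..0, φ z = ∫ z in 0..c, φ z := by
  simpa [hφ] using (intervalIntegral.integral_comp_neg (a := 0) (b := c) φ).symm

lemma intervalIntegral_sub_half_symm_of_even (hφ : ∀ z, φ (-z) = φ z)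
    (hint : ∀ a b, IntervalIntegrable φ volume a b) (c t : ℝ) :
    (∫ z in -c..t, φ z) - 1 / 2 * ∫ z in -c..c, φ z = ∫ z in 0..t, φ z := by
  rw [← intervalIntegral.integral_add_adjacent_intervals (hint (-c) 0) (hint 0 t),
    ← intervalIntegral.integral_add_adjacent_intervals (hint (-c) 0) (hint 0 c),
    intervalIntegral_neg_zero_of_even hφ]
  ring

lemma intervalIntegral_mul_centeredStep_of_even (hφ : ∀ z, φ (-z) = φ z)
    (hint : ∀ a b, IntervalIntegrable φ volume a b) {c t : ℝ} (ht : t ∈ Icc (-c) c) :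
    ∫ z in -c..c, φ z * centeredStep t z = ∫ z in 0..t, φ z := by
  have hsplit : (fun z => φ z * centeredStep t z) = fun z => (Iic t).indicator φ z - 1 / 2 * φ z := by
    ext z
    by_cases h : z ≤ t <;> simp [centeredStep, h] <;> ring
  have hind : IntervalIntegrable ((Iic t).indicator φ) volume (-c) c :=
    ⟨(hint (-c) c).1.indicator measurableSet_Iic, (hint (-c) c).2.indicator measurableSet_Iic⟩
  rw [hsplit, intervalIntegral.integral_sub hind ((hint _ _).const_mul _),
    intervalIntegral.integral_const_mul, ← intervalIntegral_sub_half_symm_of_even hφ hint c t]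
  rw [← intervalIntegral.integral_indicator ht]
  rfl

end EvenFunction

lemma integrable_mul_centeredStep {φ : ℝ → ℝ} {a b : ℝ} (hφ : IntervalIntegrable φ volume a b)
    (ρ : Measure ℝ) [IsFiniteMeasure ρ] (x : ℝ) :
    Integrable (Function.uncurry fun z y => φ z * centeredStep (x - y) z)
      ((volume.restrict (uIoc a b)).prod ρ) :=
  (hφ.def'.comp_fst ρ).mul_bdd
    (measurable_centeredStep.comp
      ((measurable_const.sub measurable_snd).prodMk measurable_fst)).aestronglyMeasurable
    (.of_forall fun _ => norm_centeredStep_le _ _)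

theorem truncated_convolution_eq_potential_general
    (R : ℝ)
    (ρ : Measure ℝ) [IsProbabilityMeasure ρ] (hsupp : ρ (Icc (-R) R)ᶜ = 0)
    (M : ℝ → ℝ) (hM : ∀ x, M x = (ρ (Iic x)).toReal - 1/2)
    (φ : ℝ → ℝ) (hφ_even : ∀ z, φ (-z) = φ z)
    (hφ_locint : ∀ a b : ℝ, IntervalIntegrable φ volume a b) :
    ∀ x ∈ Icc (-R) R,
      (∫ z in (-(2*R))..(2*R), φ z * M (x - z))
        = ∫ y, (∫ u in (0:ℝ)..(x - y), φ u) ∂ρ := by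
  intro x hx
  have hM_integral (z : ℝ) : M (x - z) = ∫ y, centeredStep (x - y) z ∂ρ := by
    simp_rw [hM, centeredStep_sub_comm x _ z, integral_centeredStep]
    rfl
  have hshift : ∀ᵐ y ∂ρ, x - y ∈ Icc (-(2 * R)) (2 * R) := by
    filter_upwards [mem_ae_iff.2 hsupp] with y hy
    constructor <;> linarith [hx.1, hx.2, hy.1, hy.2]
  calc (∫ z in (-(2*R))..(2*R), φ z * M (x - z))
      = ∫ z in (-(2*R))..(2*R), ∫ y, φ z * centeredStep (x - y) z ∂ρ := by
        simp_rw [hM_integral, integral_const_mul]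
    _ = ∫ y, (∫ z in (-(2*R))..(2*R), φ z * centeredStep (x - y) z) ∂ρ :=
        intervalIntegral_integral_swap (integrable_mul_centeredStep (hφ_locint _ _) ρ x)
    _ = ∫ y, (∫ u in (0:ℝ)..(x - y), φ u) ∂ρ :=
        integral_congr_ae (hshift.mono fun y hy =>
          intervalIntegral_mul_centeredStep_of_even hφ_even hφ_locint hy)

/-- **truncated convolution identity.** Let `ρ` be a probability measure
supported in `[−R,R]`, `M(x) = ρ((−∞,x]) − 1/2`, `φ ≥ 0` even and locally integrable, and
`Φ(x) = ∫_0^x φ`. Then for every `x ∈ [−R,R]`,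
`∫_{−2R}^{2R} φ(z) M(x−z) dz = ∫ Φ(x−y) dρ(y)`. -/
theorem truncated_convolution_eq_potential
    (R : ℝ) (hR : 0 < R)
    (ρ : Measure ℝ) [IsProbabilityMeasure ρ] (hsupp : ρ (Icc (-R) R)ᶜ = 0)
    (M : ℝ → ℝ) (hM : ∀ x, M x = (ρ (Iic x)).toReal - 1/2)
    (φ : ℝ → ℝ) (hφ_nonneg : ∀ z, 0 ≤ φ z) (hφ_even : ∀ z, φ (-z) = φ z)
    (hφ_locint : ∀ a b : ℝ, IntervalIntegrable φ volume a b) :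
    ∀ x ∈ Icc (-R) R,
      (∫ z in (-(2*R))..(2*R), φ z * M (x - z))
        = ∫ y, (∫ u in (0:ℝ)..(x - y), φ u) ∂ρ :=
  truncated_convolution_eq_potential_general R ρ hsupp M hM φ hφ_even hφ_locint
end

section
/- Let s ∈ (0,1], c_s > 0, δ > 0, and let φ : ℝ → [0,∞) be even, nonincreasing on (0,∞), and satisfy φ(z) ≤ c_s·z^{s−1} for all 0 < z ≤ δ. Let Φ(x) = ∫_0^x φ(y)dy, and let ρ be a Borel probability measure on ℝ with support contained in [−R, R]. Then the function x ↦ ∫_ℝ Φ(x − y) dρ(y) is s-Hölder continuous on [−R, R]: there exists a constant K, depending only on c_s, s, δ, φ(δ), and R, such that |∫ Φ(x − y) dρ(y) − ∫ Φ(x' − y) dρ(y)| ≤ K|x − x'|^s for all x, x' ∈ [−R, R]. -/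
open MeasureTheory Set

/-!
Write `Φ t = ∫₀ᵗ φ`. Since `φ` is even, nonnegative and nonincreasing on `(0, ∞)`, `Φ` is odd,
nondecreasing and subadditive on `[0, ∞)`, which gives `|Φ b - Φ a| ≤ 2 Φ |b - a|`. The bound
`φ z ≤ c_s z^(s-1) + φ δ` for all `z > 0` integrates to `Φ h ≤ (c_s / s) h^s + φ δ h`, and for
`h ≤ 2R` the linear term is at most `φ δ (2R)^(1-s) h^s`. Since `|(x - y) - (x' - y)| = |x - x'|`,
this Hölder bound for `Φ` passes to the average over `ρ`.
-/

theorem abs_sub_le_two_mul_of_odd_of_monotone_of_subadditive {F : ℝ → ℝ}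
    (hF_odd : ∀ x, F (-x) = -F x) (hF_mono : Monotone F)
    (hF_subadd : ∀ x y, 0 ≤ x → 0 ≤ y → F (x + y) ≤ F x + F y) (a b : ℝ) :
    |F b - F a| ≤ 2 * F |b - a| := by
  wlog hab : a ≤ b generalizing a b
  · rw [abs_sub_comm, abs_sub_comm b]
    exact this b a (le_of_not_ge hab)
  have hF0 : F 0 = 0 := by linarith [neg_zero (G := ℝ) ▸ hF_odd 0]
  have hd : 0 ≤ F (b - a) := hF0 ▸ hF_mono (sub_nonneg.2 hab)
  rw [abs_of_nonneg (sub_nonneg.2 (hF_mono hab)), abs_of_nonneg (sub_nonneg.2 hab)]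
  rcases le_total 0 a with ha | ha
  · have := hF_subadd a (b - a) ha (sub_nonneg.2 hab)
    rw [add_sub_cancel] at this
    linarith
  rcases le_total b 0 with hb | hb
  · have := hF_subadd (-b) (b - a) (neg_nonneg.2 hb) (sub_nonneg.2 hab)
    rw [show -b + (b - a) = -a by ring, hF_odd, hF_odd] at this
    linarith
  · have h₁ : F b ≤ F (b - a) := hF_mono (by linarith)
    have h₂ : F (-a) ≤ F (b - a) := hF_mono (by linarith)
    linarith [hF_odd a]

theorem self_le_rpow_one_sub_mul_rpow {h L s : ℝ} (hh : 0 ≤ h) (hhL : h ≤ L) (hs : s ≤ 1) :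
    h ≤ L ^ (1 - s) * h ^ s := by
  calc h = h ^ (1 - s) * h ^ s := by
        rw [← Real.rpow_add' hh (by norm_num), sub_add_cancel, Real.rpow_one]
    _ ≤ L ^ (1 - s) * h ^ s := by
        gcongr

section EvenKernel

variable {φ : ℝ → ℝ} {s : ℝ}

theorem le_mul_rpow_add_of_antitoneOn {cs δ : ℝ} (hcs : 0 ≤ cs) (hδ : 0 < δ) (hφδ : 0 ≤ φ δ)
    (hφ_anti : AntitoneOn φ (Ioi 0)) (hφ_bound : ∀ z, 0 < z → z ≤ δ → φ z ≤ cs * z ^ (s - 1))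
    {z : ℝ} (hz : 0 < z) : φ z ≤ cs * z ^ (s - 1) + φ δ := by
  rcases le_total z δ with hzδ | hδz
  · linarith [hφ_bound z hz hzδ]
  · have : 0 ≤ cs * z ^ (s - 1) := by positivity
    linarith [hφ_anti hδ hz hδz]

theorem intervalIntegrable_of_even_of_le_mul_rpow_add {cs C : ℝ} (hs : 0 < s)
    (hφ_nonneg : ∀ z, 0 ≤ φ z) (hφ_even : ∀ z, φ (-z) = φ z) (hφ_anti : AntitoneOn φ (Ioi 0))
    (hφ_le : ∀ z, 0 < z → φ z ≤ cs * z ^ (s - 1) + C) (a b : ℝ) :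
    IntervalIntegrable φ volume a b := by
  have hφ_pos : ∀ t, 0 ≤ t → IntervalIntegrable φ volume 0 t := fun t ht => by
    have hg : IntervalIntegrable (fun z => cs * z ^ (s - 1) + C) volume 0 t :=
      ((intervalIntegral.intervalIntegrable_rpow' (by linarith)).const_mul cs).add
        intervalIntegrable_const
    refine hg.mono_fun' ?_ ?_
    · rw [uIoc_of_le ht]
      exact (aemeasurable_restrict_of_antitoneOn measurableSet_Ioc
        (hφ_anti.mono fun z hz => hz.1)).aestronglyMeasurable
    · rw [uIoc_of_le ht, Filter.EventuallyLE, ae_restrict_iff' measurableSet_Ioc]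
      filter_upwards with z hz
      rw [Real.norm_of_nonneg (hφ_nonneg z)]
      exact hφ_le z hz.1
  have hφ_zero : ∀ t, IntervalIntegrable φ volume 0 t := fun t => by
    rcases le_total 0 t with ht | ht
    · exact hφ_pos t ht
    · simpa only [hφ_even, neg_zero, neg_neg] using
        (IntervalIntegrable.iff_comp_neg).mp (hφ_pos (-t) (neg_nonneg.2 ht))
  exact (hφ_zero a).symm.trans (hφ_zero b)

theorem integral_from_zero_neg_of_even (hφ_even : ∀ z, φ (-z) = φ z) (t : ℝ) :
    ∫ u in (0:ℝ)..-t, φ u = -∫ u in (0:ℝ)..t, φ u := by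
  have h := intervalIntegral.integral_comp_neg (a := 0) (b := t) (f := φ)
  simp only [hφ_even, neg_zero] at h
  rw [intervalIntegral.integral_symm (-t) 0, ← h]

variable (hφ : ∀ a b, IntervalIntegrable φ volume a b)
include hφ

theorem monotone_integral_from_zero_of_nonneg (hφ_nonneg : ∀ z, 0 ≤ φ z) :
    Monotone fun t => ∫ u in (0:ℝ)..t, φ u := fun a b hab => by
  have hsplit := intervalIntegral.integral_add_adjacent_intervals (hφ 0 a) (hφ a b)
  have hnonneg : 0 ≤ ∫ u in a..b, φ u := intervalIntegral.integral_nonneg hab fun u _ => hφ_nonneg u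
  dsimp only
  linarith

theorem integral_from_zero_add_le_of_antitoneOn (hφ_anti : AntitoneOn φ (Ioi 0)) {x y : ℝ}
    (hx : 0 ≤ x) (hy : 0 ≤ y) :
    ∫ u in (0:ℝ)..x + y, φ u ≤ (∫ u in (0:ℝ)..x, φ u) + ∫ u in (0:ℝ)..y, φ u := by
  have hshift : ∫ u in x..x + y, φ u ≤ ∫ u in (0:ℝ)..y, φ u := by
    have hsub : ∫ u in x..x + y, φ u = ∫ u in (0:ℝ)..y, φ (u + x) := by
      rw [intervalIntegral.integral_comp_add_right, zero_add, add_comm]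
    rw [hsub]
    refine intervalIntegral.integral_mono_on_of_le_Ioo hy ?_ (hφ 0 y) fun u hu => ?_
    · simpa using (hφ x (x + y)).comp_add_right x
    · exact hφ_anti hu.1 (mem_Ioi.2 (by linarith [hu.1])) (by linarith)
  linarith [intervalIntegral.integral_add_adjacent_intervals (hφ 0 x) (hφ x (x + y))]

theorem integral_from_zero_le_of_le_mul_rpow_add {cs C : ℝ} (hs : 0 < s)
    (hφ_le : ∀ z, 0 < z → φ z ≤ cs * z ^ (s - 1) + C) {h : ℝ} (hh : 0 ≤ h) :
    ∫ u in (0:ℝ)..h, φ u ≤ cs / s * h ^ s + C * h := by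
  have hpow : IntervalIntegrable (fun z => cs * z ^ (s - 1)) volume 0 h :=
    (intervalIntegral.intervalIntegrable_rpow' (by linarith)).const_mul cs
  calc ∫ u in (0:ℝ)..h, φ u ≤ ∫ u in (0:ℝ)..h, (cs * u ^ (s - 1) + C) :=
        intervalIntegral.integral_mono_on_of_le_Ioo hh (hφ 0 h) (hpow.add intervalIntegrable_const)
          fun u hu => hφ_le u hu.1
    _ = cs / s * h ^ s + C * h := by
        rw [intervalIntegral.integral_add hpow intervalIntegrable_const,
          intervalIntegral.integral_const_mul,
          integral_rpow (Or.inl (by linarith)), sub_add_cancel, Real.zero_rpow hs.ne',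
          intervalIntegral.integral_const, smul_eq_mul]
        ring

theorem integral_from_zero_le_mul_rpow {cs C L : ℝ} (hs₀ : 0 < s) (hs₁ : s ≤ 1) (hC : 0 ≤ C)
    (hφ_le : ∀ z, 0 < z → φ z ≤ cs * z ^ (s - 1) + C) {h : ℝ} (hh : 0 ≤ h) (hhL : h ≤ L) :
    ∫ u in (0:ℝ)..h, φ u ≤ (cs / s + C * L ^ (1 - s)) * h ^ s :=
  calc ∫ u in (0:ℝ)..h, φ u ≤ cs / s * h ^ s + C * h :=
        integral_from_zero_le_of_le_mul_rpow_add hφ hs₀ hφ_le hh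
    _ ≤ cs / s * h ^ s + C * (L ^ (1 - s) * h ^ s) := by
        gcongr
        exact self_le_rpow_one_sub_mul_rpow hh hhL hs₁
    _ = (cs / s + C * L ^ (1 - s)) * h ^ s := by ring

end EvenKernel

theorem abs_integral_comp_sub_sub_integral_comp_sub_le {F : ℝ → ℝ} {K s R : ℝ}
    (hF : Continuous F) (hF_holder : ∀ a b, |b - a| ≤ 2 * R → |F b - F a| ≤ K * |b - a| ^ s)
    (ρ : Measure ℝ) [IsProbabilityMeasure ρ] (hρ : ρ (Icc (-R) R)ᶜ = 0)
    {x x' : ℝ} (hx : x ∈ Icc (-R) R) (hx' : x' ∈ Icc (-R) R) :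
    |∫ y, F (x - y) ∂ρ - ∫ y, F (x' - y) ∂ρ| ≤ K * |x - x'| ^ s := by
  have hint : ∀ z, Integrable (fun y => F (z - y)) ρ := fun z => by
    rw [← Measure.restrict_eq_self_of_ae_mem hρ]
    exact (hF.comp (continuous_sub_left z)).continuousOn.integrableOn_compact isCompact_Icc
  have hxx' : |x - x'| ≤ 2 * R := by
    rw [abs_le]
    constructor <;> linarith [hx.1, hx.2, hx'.1, hx'.2]
  have hpointwise : ∀ y, ‖F (x - y) - F (x' - y)‖ ≤ K * |x - x'| ^ s := fun y => by
    simpa using hF_holder (x' - y) (x - y) (by simpa using hxx')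
  rw [← integral_sub (hint x) (hint x')]
  simpa using norm_integral_le_of_norm_le_const (μ := ρ) (Filter.Eventually.of_forall hpointwise)

/-- **Hölder regularity of the nonlocal potential.** Let `s ∈ (0,1]`,
`φ ≥ 0` even, nonincreasing on `(0,∞)`, with `φ(z) ≤ c_s z^{s−1}` for `0 < z ≤ δ`, and
`Φ(x) = ∫_0^x φ`. Then there is a constant `K ≥ 0`, depending only on `c_s, s, δ, φ(δ), R`
(in particular not on the measure), such that for every probability measure `ρ` supported
in `[−R,R]`, the map `x ↦ ∫ Φ(x−y) dρ(y)` is `s`-Hölder on `[−R,R]` with constant `K`. -/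
theorem potential_holder_continuity
    (s cs δ R : ℝ) (hs : s ∈ Ioc (0:ℝ) 1) (hcs : 0 < cs) (hδ : 0 < δ) (hR : 0 < R)
    (φ : ℝ → ℝ) (hφ_nonneg : ∀ z, 0 ≤ φ z) (hφ_even : ∀ z, φ (-z) = φ z)
    (hφ_anti : AntitoneOn φ (Ioi 0))
    (hφ_bound : ∀ z : ℝ, 0 < z → z ≤ δ → φ z ≤ cs * z ^ (s - 1)) :
    ∃ K : ℝ, 0 ≤ K ∧
      ∀ ρ : Measure ℝ, IsProbabilityMeasure ρ → ρ (Icc (-R) R)ᶜ = 0 →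
        ∀ x ∈ Icc (-R) R, ∀ x' ∈ Icc (-R) R,
          |(∫ y, (∫ u in (0:ℝ)..(x - y), φ u) ∂ρ)
            - ∫ y, (∫ u in (0:ℝ)..(x' - y), φ u) ∂ρ|
          ≤ K * |x - x'| ^ s := by
  obtain ⟨hs₀, hs₁⟩ := hs
  have hφδ := hφ_nonneg δ
  have hφ_le : ∀ z, 0 < z → φ z ≤ cs * z ^ (s - 1) + φ δ := fun _ hz =>
    le_mul_rpow_add_of_antitoneOn hcs.le hδ hφδ hφ_anti hφ_bound hz
  have hφ_int := intervalIntegrable_of_even_of_le_mul_rpow_add hs₀ hφ_nonneg hφ_even hφ_anti hφ_le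
  set M := cs / s + φ δ * (2 * R) ^ (1 - s)
  refine ⟨2 * M, by positivity, fun ρ _ hρ x hx x' hx' =>
    abs_integral_comp_sub_sub_integral_comp_sub_le
      (intervalIntegral.continuous_primitive hφ_int 0) (fun a b hab => ?_) ρ hρ hx hx'⟩
  calc _ ≤ 2 * ∫ u in (0:ℝ)..|b - a|, φ u :=
        abs_sub_le_two_mul_of_odd_of_monotone_of_subadditive
          (integral_from_zero_neg_of_even hφ_even)
          (monotone_integral_from_zero_of_nonneg hφ_int hφ_nonneg)
          (fun _ _ => integral_from_zero_add_le_of_antitoneOn hφ_int hφ_anti) a b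
    _ ≤ 2 * (M * |b - a| ^ s) := by
        gcongr
        exact integral_from_zero_le_mul_rpow hφ_int hs₀ hs₁ hφδ hφ_le (abs_nonneg _) hab
    _ = 2 * M * |b - a| ^ s := by ring
end
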